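/- In the Greedy Chamberlin–Courant (GreedyCC) rule, consider the election with disjoint candidate sets A = {a_1,…,a_k} and B = {b_1,…,b_k}, voters v_{i,j} (i,j ∈ [k]) approving {a_i, b_j}, one voter v^s with empty approval set, and tie-breaking order b_1 ≻ b_2 ≻ ⋯ ≻ b_k ≻ a_1 ≻ ⋯ ≻ a_k. Then GreedyCC outputs B as the winning size-k committee. If v^s's vote is changed to approve a_1, then GreedyCC outputs A. Hence GreedyCC is k-Add-robust. -/

import Mathlib

open Finset

/-- Marginal Chamberlin–Courant score of `c` w.r.t. current committee `W`:
the number of voters approving `c` and no member of `W`. -/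
def ccMarg {V C : Type*} [Fintype V] [DecidableEq C]
    (A : V → Finset C) (W : Finset C) (c : C) : ℕ :=
  (Finset.univ.filter (fun v => c ∈ A v ∧ ∀ b ∈ W, b ∉ A v)).card

/-- GreedyCC picks `c` next: `c` is unselected, maximizes the marginal CC score
among unselected candidates, and is earliest in the tie-breaking order `tb`
(smaller `tb` value = higher priority) among the maximizers. -/
def ccPicksNext {V C : Type*} [Fintype V] [DecidableEq C]
    (A : V → Finset C) (tb : C → ℕ) (W : Finset C) (c : C) : Prop :=
  c ∉ W ∧ (∀ d, d ∉ W → ccMarg A W d ≤ ccMarg A W c) ∧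
    (∀ d, d ∉ W → ccMarg A W d = ccMarg A W c → tb c ≤ tb d)

/-- `GreedyCCChain A tb n W`: `W` is the committee built by `n` iterations of GreedyCC. -/
def GreedyCCChain {V C : Type*} [Fintype V] [DecidableEq C]
    (A : V → Finset C) (tb : C → ℕ) : ℕ → Finset C → Prop
  | 0, W => W = ∅
  | n + 1, W => ∃ W' c, GreedyCCChain A tb n W' ∧ ccPicksNext A tb W' c ∧ W = insert c W'

/-- Candidates `a_1, …, a_k` (left) and `b_1, …, b_k` (right). -/
abbrev GCand (k : ℕ) := Fin k ⊕ Fin k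

def gAset (k : ℕ) : Finset (GCand k) := Finset.univ.image Sum.inl
def gBset (k : ℕ) : Finset (GCand k) := Finset.univ.image Sum.inr

/-- Tie-breaking order `b_1 ≻ ⋯ ≻ b_k ≻ a_1 ≻ ⋯ ≻ a_k` (smaller = preferred). -/
def gTb (k : ℕ) : GCand k → ℕ := Sum.elim (fun i => k + (i : ℕ)) (fun j => (j : ℕ))

/-- Voters `v_{i,j}` approving `{a_i, b_j}` and a voter `v^s` with empty approval set. -/
def gProfile (k : ℕ) : (Fin k × Fin k) ⊕ Unit → Finset (GCand k)
  | Sum.inl (i, j) => {Sum.inl i, Sum.inr j}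
  | Sum.inr _ => ∅

/-- The profile after adding an approval for `a_1` to `v^s`'s vote. -/
def gProfile' (k : ℕ) (hk : 0 < k) : (Fin k × Fin k) ⊕ Unit → Finset (GCand k) :=
  Function.update (gProfile k) (Sum.inr ())
    (insert (Sum.inl ⟨0, hk⟩) (gProfile k (Sum.inr ())))

/-!
In the original election, once `b_1, …, b_n` are chosen, every remaining `b_j` still covers its
`k` voters `v_{i,j}`, while every `a_i` covers only the `k - n` voters `v_{i,j}` with `j > n`; so
GreedyCC takes `b_{n+1}` next (at `n = 0` through the tie-breaking order). After `v^s` approves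
`a_1`, the candidate `a_1` covers `k + 1` voters and is taken first, and from then on every
remaining `a_i` covers `k` voters against `k - n` for every `b_j`, so GreedyCC takes `a_1, …, a_k`.
The tie-breaking order is injective, so each greedy step is forced and these are the only outputs.
-/

section marginal

variable {V C : Type*} [Fintype V] [DecidableEq C]

def ccMarginalVoters (A : V → Finset C) (W : Finset C) (c : C) : Finset V :=
  {v | c ∈ A v ∧ Disjoint W (A v)}

@[simp]
theorem mem_ccMarginalVoters {A : V → Finset C} {W : Finset C} {c : C} {v : V} :
    v ∈ ccMarginalVoters A W c ↔ c ∈ A v ∧ Disjoint W (A v) := by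
  simp [ccMarginalVoters]

theorem ccMarg_eq_card_ccMarginalVoters (A : V → Finset C) (W : Finset C) (c : C) :
    ccMarg A W c = #(ccMarginalVoters A W c) := by
  simp only [ccMarg, ccMarginalVoters, disjoint_left]

end marginal

theorem GreedyCCChain.eq_of_injective {V C : Type*} [Fintype V] [DecidableEq C]
    {A : V → Finset C} {tb : C → ℕ} (htb : Function.Injective tb) :
    ∀ {n : ℕ} {W W' : Finset C}, GreedyCCChain A tb n W → GreedyCCChain A tb n W' → W = W'
  | 0, W, W', (hW : W = ∅), (hW' : W' = ∅) => hW.trans hW'.symm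
  | _ + 1, _, _, ⟨U, c, hU, ⟨hcU, hc_max, hc_tb⟩, hW⟩, ⟨U', c', hU', ⟨hc'U, hc'_max, hc'_tb⟩, hW'⟩ => by
    obtain rfl : U = U' := eq_of_injective htb hU hU'
    have hmarg : ccMarg A U c' = ccMarg A U c := (hc_max c' hc'U).antisymm (hc'_max c hcU)
    have hcc' : c = c' := htb ((hc_tb c' hc'U hmarg).antisymm (hc'_tb c hcU hmarg.symm))
    rw [hW, hW', hcc']

def initialSeg {C : Type*} {k : ℕ} (f : Fin k ↪ C) (n : ℕ) : Finset C :=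
  (univ.filter fun j : Fin k => (j : ℕ) < n).map f

section initialSeg

variable {C : Type*} {k : ℕ} (f : Fin k ↪ C)

@[simp]
theorem mem_initialSeg {n : ℕ} {c : C} :
    c ∈ initialSeg f n ↔ ∃ j : Fin k, (j : ℕ) < n ∧ f j = c := by
  simp [initialSeg]

theorem initialSeg_zero : initialSeg f 0 = ∅ := by
  ext; simp

theorem initialSeg_self : initialSeg f k = univ.map f := by
  ext; simp

theorem insert_initialSeg [DecidableEq C] {n : ℕ} (hn : n < k) :
    insert (f ⟨n, hn⟩) (initialSeg f n) = initialSeg f (n + 1) := by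
  ext c
  simp only [mem_insert, mem_initialSeg]
  constructor
  · rintro (rfl | ⟨j, hj, rfl⟩)
    · exact ⟨_, n.lt_succ_self, rfl⟩
    · exact ⟨j, by omega, rfl⟩
  · rintro ⟨j, hj, rfl⟩
    rcases Nat.lt_succ_iff_lt_or_eq.1 hj with hjn | hjn
    · exact .inr ⟨j, hjn, rfl⟩
    · exact .inl (congrArg f (Fin.ext hjn))

theorem greedyCCChain_initialSeg {V : Type*} [Fintype V] [DecidableEq C]
    {A : V → Finset C} {tb : C → ℕ}
    (hpick : ∀ n (hn : n < k), ccPicksNext A tb (initialSeg f n) (f ⟨n, hn⟩)) :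
    ∀ n ≤ k, GreedyCCChain A tb n (initialSeg f n)
  | 0, _ => initialSeg_zero f
  | n + 1, hn => ⟨initialSeg f n, f ⟨n, hn⟩, greedyCCChain_initialSeg hpick n (by omega),
      hpick n hn, (insert_initialSeg f hn).symm⟩

end initialSeg

theorem Fin.card_filter_le_val (k n : ℕ) : #{j : Fin k | n ≤ (j : ℕ)} = k - n := by
  have h := card_filter_add_card_filter_not (s := univ) (fun j : Fin k => (j : ℕ) < n)
  simp only [not_lt, card_univ, Fintype.card_fin, Fin.card_filter_val_lt] at h
  omega

section election

variable {k n : ℕ}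

theorem ccMarg_gProfile_inl (i : Fin k) :
    ccMarg (gProfile k) (initialSeg .inr n) (.inl i) = k - n := by
  have huncovered : ccMarginalVoters (gProfile k) (initialSeg .inr n) (.inl i) =
      (({i} : Finset (Fin k)) ×ˢ ({j : Fin k | n ≤ (j : ℕ)} : Finset (Fin k))).map .inl := by
    ext (⟨i', j⟩ | _) <;> simp [gProfile, eq_comm, and_comm]
  rw [ccMarg_eq_card_ccMarginalVoters, huncovered, card_map, card_product, card_singleton, one_mul,
    Fin.card_filter_le_val]

theorem ccMarg_gProfile_inr {j : Fin k} (hj : n ≤ (j : ℕ)) :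
    ccMarg (gProfile k) (initialSeg .inr n) (.inr j) = k := by
  have huncovered : ccMarginalVoters (gProfile k) (initialSeg .inr n) (.inr j) =
      ((univ : Finset (Fin k)) ×ˢ {j}).map .inl := by
    ext (⟨i, j'⟩ | _) <;> simp +contextual [gProfile, eq_comm (a := j), hj]
  simp [ccMarg_eq_card_ccMarginalVoters, huncovered]

theorem ccMarg_gProfile'_inr (hk : 0 < k) (j : Fin k) :
    ccMarg (gProfile' k hk) (initialSeg .inl n) (.inr j) = k - n := by
  have huncovered : ccMarginalVoters (gProfile' k hk) (initialSeg .inl n) (.inr j) =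
      (({i : Fin k | n ≤ (i : ℕ)} : Finset (Fin k)) ×ˢ {j}).map .inl := by
    ext (⟨i, j'⟩ | _) <;> simp [gProfile', gProfile, Function.update, eq_comm, and_comm]
  rw [ccMarg_eq_card_ccMarginalVoters, huncovered, card_map, card_product, card_singleton, mul_one,
    Fin.card_filter_le_val]

theorem ccMarg_gProfile'_inl (hk : 0 < k) {i : Fin k} (hi : n ≤ (i : ℕ)) :
    ccMarg (gProfile' k hk) (initialSeg .inl n) (.inl i) = k + if (i : ℕ) = 0 then 1 else 0 := by
  have huncovered : ccMarginalVoters (gProfile' k hk) (initialSeg .inl n) (.inl i) =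
      (({i} : Finset (Fin k)) ×ˢ univ).disjSum (if (i : ℕ) = 0 then univ else ∅) := by
    ext (⟨i', j⟩ | _)
    · simp +contextual [gProfile', gProfile, Function.update, eq_comm (a := i), hi]
    · split_ifs with hi0 <;> simp [gProfile', gProfile, Function.update, Fin.ext_iff, hi0]
      omega
  simp [ccMarg_eq_card_ccMarginalVoters, huncovered, apply_ite card]

theorem ccPicksNext_gProfile (hn : n < k) :
    ccPicksNext (gProfile k) (gTb k) (initialSeg .inr n) (.inr ⟨n, hn⟩) := by
  have hmarg : ccMarg (gProfile k) (initialSeg .inr n) (.inr ⟨n, hn⟩) = k :=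
    ccMarg_gProfile_inr le_rfl
  refine ⟨by simp, ?_, ?_⟩
  · rintro (i | j) hj
    · rw [hmarg, ccMarg_gProfile_inl]
      omega
    · rw [hmarg, ccMarg_gProfile_inr (by simpa using hj)]
  · rintro (i | j) hj htie
    · rw [hmarg, ccMarg_gProfile_inl] at htie
      simp only [gTb, Sum.elim_inl, Sum.elim_inr]
      omega
    · simpa [gTb] using hj

theorem ccPicksNext_gProfile' (hk : 0 < k) (hn : n < k) :
    ccPicksNext (gProfile' k hk) (gTb k) (initialSeg .inl n) (.inl ⟨n, hn⟩) := by
  have hmarg : ccMarg (gProfile' k hk) (initialSeg .inl n) (.inl ⟨n, hn⟩) =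
      k + if n = 0 then 1 else 0 :=
    ccMarg_gProfile'_inl hk le_rfl
  refine ⟨by simp, ?_, ?_⟩
  · rintro (i | j) hi
    · rw [hmarg, ccMarg_gProfile'_inl hk (by simpa using hi)]
      have hni : n ≤ (i : ℕ) := by simpa using hi
      split_ifs <;> omega
    · rw [hmarg, ccMarg_gProfile'_inr]
      omega
  · rintro (i | j) hi htie
    · simpa [gTb] using hi
    · rw [hmarg, ccMarg_gProfile'_inr] at htie
      split_ifs at htie <;> omega

end election

theorem gTb_injective (k : ℕ) : Function.Injective (gTb k) := by
  rintro (i | i) (j | j) h <;> simp only [gTb, Sum.elim_inl, Sum.elim_inr] at h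
  · exact congrArg Sum.inl (Fin.ext (by omega))
  · exact absurd h (by omega)
  · exact absurd h (by omega)
  · exact congrArg Sum.inr (Fin.ext h)

/-- GreedyCC outputs `B` on the original election and `A` after a single
added approval; `A` and `B` are disjoint, hence GreedyCC is `k`-Add-robust. -/
theorem greedyCC_k_add_robust (k : ℕ) (hk : 0 < k) :
    GreedyCCChain (gProfile k) (gTb k) k (gBset k) ∧
    (∀ W : Finset (GCand k), GreedyCCChain (gProfile k) (gTb k) k W → W = gBset k) ∧
    GreedyCCChain (gProfile' k hk) (gTb k) k (gAset k) ∧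
    (∀ W : Finset (GCand k), GreedyCCChain (gProfile' k hk) (gTb k) k W → W = gAset k) ∧
    Disjoint (gAset k) (gBset k) := by
  have hB : GreedyCCChain (gProfile k) (gTb k) k (gBset k) := by
    have := greedyCCChain_initialSeg _ (fun n hn => ccPicksNext_gProfile hn) k le_rfl
    rwa [initialSeg_self, map_eq_image] at this
  have hA : GreedyCCChain (gProfile' k hk) (gTb k) k (gAset k) := by
    have := greedyCCChain_initialSeg _ (fun n hn => ccPicksNext_gProfile' hk hn) k le_rfl
    rwa [initialSeg_self, map_eq_image] at this
  refine ⟨hB, fun W hW => hW.eq_of_injective (gTb_injective k) hB, hA,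
    fun W hW => hW.eq_of_injective (gTb_injective k) hA, ?_⟩
  simp [gAset, gBset, disjoint_left]
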